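/- arXiv:1602.05444 — 3 statements merged into one kernel-verified Lean document; each statement's English description precedes it below -/
import Mathlib

section
/- Let N = 2^J, let x ∈ ℝ^N have nonnegative entries, and let x̂ = F_N x. For every j with 0 ≤ j ≤ J-1 and every 0 ≤ k < 2^j, the odd-indexed subsampled Fourier values satisfy x̂_{2^{J-j-1}(2k+1)} = Σ_{ℓ=0}^{2^j - 1} ω_{2^{j+1}}^{(2k+1)ℓ} (2 x_ℓ^(j+1) − x_ℓ^(j)), where ω_{2^{j+1}} = e^{-2πi/2^{j+1}}. -/
open Complex Finset

/-- `ω_M = e^{-2πi/M}`. -/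
noncomputable def dftOmega (M : ℕ) : ℂ := Complex.exp (-2 * Real.pi * Complex.I / M)

/-- Discrete Fourier transform of length `M`: `(F_M v)_k = Σ_{r<M} ω_M^{k r} v_r`. -/
noncomputable def dft (M : ℕ) (v : ℕ → ℂ) (k : ℕ) : ℂ :=
  ∑ r ∈ Finset.range M, dftOmega M ^ (k * r) * v r

/-- The `2^j`-periodization of a vector `x ∈ ℝ^{2^J}`:
`x^(j)_k = Σ_{ℓ < 2^{J-j}} x_{k + 2^j ℓ}`. -/
noncomputable def periodization (J j : ℕ) (x : ℕ → ℝ) (k : ℕ) : ℝ :=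
  ∑ ℓ ∈ Finset.range (2 ^ (J - j)), x (k + 2 ^ j * ℓ)

lemma sum_range_mul' {M : Type*} [AddCommMonoid M] (f : ℕ → M) (a b : ℕ) (ha : 0 < a) :
    ∑ r ∈ Finset.range (a * b), f r
      = ∑ ℓ ∈ Finset.range a, ∑ m ∈ Finset.range b, f (ℓ + a * m) := by
  rw [← Finset.sum_product']
  refine Finset.sum_nbij' (fun r => (r % a, r / a)) (fun p => p.1 + a * p.2) ?_ ?_ ?_ ?_ ?_
  · intro r hr
    simp only [Finset.mem_range, Finset.mem_product] at hr ⊢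
    exact ⟨Nat.mod_lt _ ha, (Nat.div_lt_iff_lt_mul ha).2 (by rwa [mul_comm])⟩
  · intro p hp
    simp only [Finset.mem_range, Finset.mem_product] at hp ⊢
    have h1 : a * p.2 + a ≤ a * b := by
      rw [← Nat.mul_succ]; exact Nat.mul_le_mul_left a (by omega)
    omega
  · intro r _; exact Nat.mod_add_div r a
  · intro p hp
    simp only [Finset.mem_range, Finset.mem_product] at hp
    have h1 : (p.1 + a * p.2) % a = p.1 := by
      rw [Nat.add_mul_mod_self_left, Nat.mod_eq_of_lt hp.1]
    have h2 : (p.1 + a * p.2) / a = p.2 := by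
      rw [Nat.add_mul_div_left _ _ ha, Nat.div_eq_of_lt hp.1, zero_add]
    exact Prod.ext h1 h2
  · intro r _; rw [Nat.mod_add_div r a]

lemma dftOmega_pow_mul (a b : ℕ) (ha : 0 < a) (hb : 0 < b) :
    dftOmega (a * b) ^ b = dftOmega a := by
  unfold dftOmega
  rw [← Complex.exp_nat_mul]
  congr 1
  have ha' : (a : ℂ) ≠ 0 := Nat.cast_ne_zero.2 ha.ne'
  have hb' : (b : ℂ) ≠ 0 := Nat.cast_ne_zero.2 hb.ne'
  push_cast
  field_simp

lemma dftOmega_pow_self (M : ℕ) (hM : 0 < M) : dftOmega M ^ M = 1 := by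
  unfold dftOmega
  rw [← Complex.exp_nat_mul]
  have hM' : (M : ℂ) ≠ 0 := Nat.cast_ne_zero.2 hM.ne'
  rw [show (M : ℂ) * (-2 * Real.pi * Complex.I / M) = -(2 * Real.pi * Complex.I) by
    field_simp]
  rw [Complex.exp_neg, Complex.exp_two_pi_mul_I, inv_one]

lemma dftOmega_half (j : ℕ) : dftOmega (2 ^ (j + 1)) ^ (2 ^ j) = -1 := by
  unfold dftOmega
  rw [← Complex.exp_nat_mul]
  have h2 : ((2:ℂ) ^ j) ≠ 0 := pow_ne_zero j two_ne_zero
  rw [show ((2 ^ j : ℕ) : ℂ) * (-2 * Real.pi * Complex.I / ((2 ^ (j+1) : ℕ))) =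
      -(Real.pi * Complex.I) by push_cast [pow_succ]; field_simp]
  rw [Complex.exp_neg, Complex.exp_pi_mul_I]
  norm_num

lemma per_succ (J j : ℕ) (x : ℕ → ℝ) (hj : j + 1 ≤ J) (ℓ : ℕ) :
    periodization J j x ℓ
      = periodization J (j + 1) x ℓ + periodization J (j + 1) x (ℓ + 2 ^ j) := by
  unfold periodization
  rw [show J - j = (J - (j + 1)) + 1 by omega, pow_succ,
    mul_comm ((2:ℕ) ^ (J - (j+1))) 2, sum_range_mul' _ 2 _ two_pos,
    Finset.sum_range_succ, Finset.sum_range_one]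
  congr 1
  · exact Finset.sum_congr rfl fun m _ => by congr 1; ring
  · exact Finset.sum_congr rfl fun m _ => by congr 1; ring

/-- for `0 ≤ j ≤ J-1` and `0 ≤ k < 2^j`,
`x̂_{2^{J-j-1}(2k+1)} = Σ_{ℓ<2^j} ω_{2^{j+1}}^{(2k+1)ℓ} (2 x^(j+1)_ℓ − x^(j)_ℓ)`. -/
theorem dft_periodization_odd (J : ℕ) (x : ℕ → ℝ) (hx : ∀ k, 0 ≤ x k)
    (j : ℕ) (hj : j + 1 ≤ J) (k : ℕ) (hk : k < 2 ^ j) :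
    dft (2 ^ J) (fun n => (x n : ℂ)) (2 ^ (J - j - 1) * (2 * k + 1))
      = ∑ ℓ ∈ Finset.range (2 ^ j),
          dftOmega (2 ^ (j + 1)) ^ ((2 * k + 1) * ℓ) *
            (2 * (periodization J (j + 1) x ℓ : ℂ) - (periodization J j x ℓ : ℂ)) := by
  have hab : (2:ℕ) ^ J = 2 ^ (j + 1) * 2 ^ (J - j - 1) := by
    rw [← pow_add]; congr 1; omega
  unfold dft
  rw [hab, sum_range_mul' _ _ _ (pow_pos two_pos _)]
  have key : ∀ ℓ m : ℕ,
      dftOmega (2 ^ (j + 1) * 2 ^ (J - j - 1)) ^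
          ((2 ^ (J - j - 1) * (2 * k + 1)) * (ℓ + 2 ^ (j + 1) * m))
        = dftOmega (2 ^ (j + 1)) ^ ((2 * k + 1) * ℓ) := by
    intro ℓ m
    have h1 : dftOmega (2 ^ (j + 1) * 2 ^ (J - j - 1)) ^ (2 ^ (J - j - 1) * ((2 * k + 1) * ℓ))
        = dftOmega (2 ^ (j + 1)) ^ ((2 * k + 1) * ℓ) := by
      rw [pow_mul, dftOmega_pow_mul _ _ (pow_pos two_pos _) (pow_pos two_pos _)]
    have h2 : dftOmega (2 ^ (j + 1) * 2 ^ (J - j - 1)) ^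
        ((2 ^ (j + 1) * 2 ^ (J - j - 1)) * ((2 * k + 1) * m)) = 1 := by
      rw [pow_mul, dftOmega_pow_self _ (Nat.mul_pos (pow_pos two_pos _) (pow_pos two_pos _)),
        one_pow]
    rw [show (2 ^ (J - j - 1) * (2 * k + 1)) * (ℓ + 2 ^ (j + 1) * m)
        = 2 ^ (J - j - 1) * ((2 * k + 1) * ℓ)
          + (2 ^ (j + 1) * 2 ^ (J - j - 1)) * ((2 * k + 1) * m) by ring]
    rw [pow_add, h1, h2, mul_one]
  simp only [key]
  have hper : ∀ ℓ : ℕ, ((periodization J (j + 1) x ℓ : ℝ) : ℂ)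
      = ∑ m ∈ Finset.range (2 ^ (J - j - 1)), (x (ℓ + 2 ^ (j + 1) * m) : ℂ) := by
    intro ℓ
    unfold periodization
    rw [show J - (j + 1) = J - j - 1 by omega]
    push_cast
    rfl
  have step1 : ∀ ℓ ∈ Finset.range (2 ^ (j + 1)),
      ∑ m ∈ Finset.range (2 ^ (J - j - 1)),
          dftOmega (2 ^ (j + 1)) ^ ((2 * k + 1) * ℓ) * (x (ℓ + 2 ^ (j + 1) * m) : ℂ)
        = dftOmega (2 ^ (j + 1)) ^ ((2 * k + 1) * ℓ) * (periodization J (j + 1) x ℓ : ℂ) := by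
    intro ℓ _
    rw [← Finset.mul_sum, hper]
  rw [Finset.sum_congr rfl step1,
    show Finset.range (2 ^ (j + 1)) = Finset.range (2 ^ j + 2 ^ j) from by
      rw [pow_succ]; ring_nf,
    Finset.sum_range_add, ← Finset.sum_add_distrib]
  refine Finset.sum_congr rfl fun ℓ hℓ => ?_
  have h3 : dftOmega (2 ^ (j + 1)) ^ ((2 * k + 1) * (2 ^ j + ℓ))
      = -(dftOmega (2 ^ (j + 1)) ^ ((2 * k + 1) * ℓ)) := by
    rw [show (2 * k + 1) * (2 ^ j + ℓ) = 2 ^ j * (2 * k + 1) + (2 * k + 1) * ℓ by ring,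
      pow_add, pow_mul, dftOmega_half, Odd.neg_one_pow ⟨k, by ring⟩]
    ring
  rw [h3, per_succ J j x hj ℓ, Nat.add_comm (2 ^ j) ℓ]
  push_cast
  ring
end

section
/- Let N = 2^J, let x ∈ ℝ^N have nonnegative entries, and let x̂ = F_N x. Fix j with 0 ≤ j ≤ J-1, an index μ with 0 ≤ μ < 2^j, and L with 0 ≤ L ≤ j, and assume the support of x^(j) is contained in { (μ + r) mod 2^j : 0 ≤ r < 2^L }. Define x̃^(j) = ( x_{(μ+r) mod 2^j}^(j) )_{r=0}^{2^L-1}, x̃_0^(j+1) = ( x_{(μ+r) mod 2^j}^(j+1) )_{r=0}^{2^L-1}, and y = ( x̂_{2^{J-L} p + 2^{J-j-1}} )_{p=0}^{2^L-1}. Then x̃_0^(j+1) = (1/2) diag( ω_{2^{j+1}}^{ -((μ+r) mod 2^j) } )_{r=0}^{2^L-1} · F_{2^L}^{-1} · diag( ω_{2^L}^{ -μ p } )_{p=0}^{2^L-1} · y + (1/2) x̃^(j). Moreover ( x_{2^j + ((μ+r) mod 2^j)}^(j+1) )_{r=0}^{2^L-1} = x̃^(j) − x̃_0^(j+1). -/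
open Complex Finset

/-- The Fourier matrix `F_M = (ω_M^{pq})_{p,q=0}^{M-1}`. -/
noncomputable def fourierMatrix (M : ℕ) : Matrix (Fin M) (Fin M) ℂ :=
  fun p q => dftOmega M ^ ((p : ℕ) * (q : ℕ))

open Matrix

/-!
Put `d_m = x^(j+1)_m - x^(j+1)_{m+2^j}` for `m < 2^j`. The sampled frequencies
`k = 2^{J-L} p + 2^{J-j-1}` satisfy `ω_N^{k 2^{j+1}} = 1` and `ω_N^{k 2^j} = -1`, so
`x̂_k = Σ_{m<2^j} ω_N^{k m} d_m`. Since `x ≥ 0`, `d` vanishes wherever `x^(j)` does, so only the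
window `m = (μ + r) mod 2^j`, `r < 2^L`, contributes, and there
`ω_N^{k m} = ω_{2^L}^{p (μ + r)} ω_{2^{j+1}}^m`. Hence `ω_{2^L}^{-μ p} y_p = (F_{2^L} z)_p` with
`z_r = ω_{2^{j+1}}^{m_r} d_{m_r}`; inverting `F_{2^L}` recovers `d` on the window, and
`x^(j+1)_m = (x^(j)_m + d_m) / 2`.
-/

lemma dftOmega_ne_zero (M : ℕ) : dftOmega M ≠ 0 := Complex.exp_ne_zero _

lemma isPrimitiveRoot_dftOmega {M : ℕ} (hM : M ≠ 0) : IsPrimitiveRoot (dftOmega M) M := by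
  have h : dftOmega M = (Complex.exp (2 * Real.pi * Complex.I / M))⁻¹ := by
    rw [dftOmega, ← Complex.exp_neg]; ring_nf
  rw [h]
  exact (Complex.isPrimitiveRoot_exp M hM).inv

lemma dftOmega_pow_eq_pow_of_modEq {M a b : ℕ} (hM : M ≠ 0) (h : a ≡ b [MOD M]) :
    dftOmega M ^ a = dftOmega M ^ b :=
  pow_eq_pow_of_modEq h (isPrimitiveRoot_dftOmega hM).pow_eq_one

lemma dftOmega_mul_pow {c : ℕ} (M : ℕ) (hc : c ≠ 0) : dftOmega (c * M) ^ c = dftOmega M := by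
  rw [dftOmega, dftOmega, ← Complex.exp_nat_mul, Nat.cast_mul, mul_div_assoc',
    mul_div_mul_left _ _ (Nat.cast_ne_zero.mpr hc)]

lemma dftOmega_two_pow_pow {a b : ℕ} (h : b ≤ a) (t : ℕ) :
    dftOmega (2 ^ a) ^ (2 ^ (a - b) * t) = dftOmega (2 ^ b) ^ t := by
  rw [pow_mul, show 2 ^ a = 2 ^ (a - b) * 2 ^ b by rw [← pow_add, Nat.sub_add_cancel h],
    dftOmega_mul_pow _ (by positivity)]

lemma dftOmega_two : dftOmega 2 = -1 :=
  (isPrimitiveRoot_dftOmega two_ne_zero).eq_neg_one_of_two_right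

lemma dftOmega_two_pow_succ_pow (j : ℕ) : dftOmega (2 ^ (j + 1)) ^ 2 ^ j = -1 := by
  rw [pow_succ, dftOmega_mul_pow _ (pow_ne_zero j two_ne_zero), dftOmega_two]

lemma fourierMatrix_map_inv_mul (M : ℕ) :
    (fourierMatrix M).map (·⁻¹) * fourierMatrix M = (M : ℂ) • 1 := by
  rcases Nat.eq_zero_or_pos M with rfl | hM
  · exact Subsingleton.elim _ _
  have hω := isPrimitiveRoot_dftOmega hM.ne'
  ext p q
  set z := dftOmega M ^ (q : ℕ) * (dftOmega M ^ (p : ℕ))⁻¹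
  have hterm : ∀ r : Fin M,
      (dftOmega M ^ ((p : ℕ) * r))⁻¹ * dftOmega M ^ ((r : ℕ) * q) = z ^ (r : ℕ) := by
    intro r
    rw [mul_pow, inv_pow, ← pow_mul, ← pow_mul]; ring
  simp only [Matrix.mul_apply, Matrix.map_apply, fourierMatrix, hterm, Matrix.smul_apply,
    Matrix.one_apply, smul_eq_mul]
  rw [Fin.sum_univ_eq_sum_range (z ^ ·)]
  split_ifs with hpq
  · subst hpq
    simp [z, mul_inv_cancel₀ (pow_ne_zero _ (dftOmega_ne_zero M))]
  · have hz : z ≠ 1 := fun h => hpq <| Fin.ext <| hω.pow_inj p.isLt q.isLt <|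
      (eq_of_mul_inv_eq_one h).symm
    have hzM : z ^ M = 1 := by
      have h1 (n : ℕ) : (dftOmega M ^ n) ^ M = 1 := by
        rw [← pow_mul, pow_mul', hω.pow_eq_one, one_pow]
      rw [mul_pow, inv_pow, h1, h1, inv_one, mul_one]
    rw [geom_sum_eq hz, hzM, sub_self, zero_div, mul_zero]

lemma fourierMatrix_inv_mulVec_mulVec {M : ℕ} (hM : M ≠ 0) (z : Fin M → ℂ) :
    (fourierMatrix M)⁻¹ *ᵥ (fourierMatrix M *ᵥ z) = z := by
  have hleft : ((M : ℂ)⁻¹ • (fourierMatrix M).map (·⁻¹)) * fourierMatrix M = 1 := by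
    rw [Matrix.smul_mul, fourierMatrix_map_inv_mul, smul_smul,
      inv_mul_cancel₀ (Nat.cast_ne_zero.mpr hM), one_smul]
  rw [Matrix.mulVec_mulVec, Matrix.inv_eq_left_inv hleft, hleft, Matrix.one_mulVec]

lemma Finset.sum_range_mul_eq_sum_sum {β : Type*} [AddCommMonoid β] (f : ℕ → β) (M K : ℕ) :
    ∑ n ∈ range (M * K), f n = ∑ m ∈ range M, ∑ ℓ ∈ range K, f (m + M * ℓ) := by
  induction K with
  | zero => simp
  | succ K ih =>
    rw [Nat.mul_succ, sum_range_add, ih, ← sum_add_distrib]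
    refine sum_congr rfl fun m _ => ?_
    rw [sum_range_succ, add_comm (M * K)]

lemma Finset.sum_range_add_self_of_pow_eq_neg_one {R : Type*} [CommRing R] {ω : R} {a : ℕ}
    (h : ω ^ a = -1) (f : ℕ → R) :
    ∑ m ∈ range (a + a), ω ^ m * f m = ∑ m ∈ range a, ω ^ m * (f m - f (m + a)) := by
  rw [sum_range_add, ← sum_add_distrib]
  refine sum_congr rfl fun m _ => ?_
  rw [pow_add, h, add_comm a m]
  ring

lemma Finset.sum_range_eq_sum_window {β : Type*} [AddCommMonoid β] {M n : ℕ} (μ : ℕ)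
    (hn : n ≤ M) (g : ℕ → β) (hg : ∀ m < M, g m ≠ 0 → ∃ r < n, m = (μ + r) % M) :
    ∑ m ∈ range M, g m = ∑ r ∈ range n, g ((μ + r) % M) := by
  have hwindow : (range n).image (fun r => (μ + r) % M) ⊆ range M := by
    simp only [subset_iff, mem_image, mem_range]
    rintro _ ⟨r, hr, rfl⟩
    exact Nat.mod_lt _ (by omega)
  have hinj : Set.InjOn (fun r => (μ + r) % M) (range n) := by
    intro r hr s hs hrs
    simp only [coe_range, Set.mem_Iio] at hr hs
    have := Nat.ModEq.add_left_cancel' μ hrs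
    rwa [Nat.ModEq, Nat.mod_eq_of_lt (by omega), Nat.mod_eq_of_lt (by omega)] at this
  rw [← sum_image hinj, sum_subset hwindow]
  intro m hm hmw
  by_contra hgm
  obtain ⟨r, hr, rfl⟩ := hg m (mem_range.mp hm) hgm
  exact hmw (mem_image_of_mem _ (mem_range.mpr hr))

section Periodization

variable {J j : ℕ} (x : ℕ → ℝ)

lemma periodization_eq_add_periodization_succ (hj : j < J) (k : ℕ) :
    periodization J j x k
      = periodization J (j + 1) x k + periodization J (j + 1) x (k + 2 ^ j) := by
  have h2 : 2 ^ (J - j) = 2 * 2 ^ (J - (j + 1)) := by rw [← pow_succ']; congr 1; omega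
  rw [periodization, h2, sum_range_mul_eq_sum_sum, sum_range_succ, sum_range_one,
    periodization, periodization]
  congr 1 <;> refine sum_congr rfl fun ℓ _ => congrArg x ?_ <;> ring

lemma periodization_succ_eq_zero (hx : ∀ k, 0 ≤ x k) (hj : j < J) {k : ℕ}
    (hk : periodization J j x k = 0) :
    periodization J (j + 1) x k = 0 ∧ periodization J (j + 1) x (k + 2 ^ j) = 0 := by
  have hnonneg (i l : ℕ) : 0 ≤ periodization J i x l := sum_nonneg fun _ _ => hx _
  rwa [periodization_eq_add_periodization_succ x hj,
    add_eq_zero_iff_of_nonneg (hnonneg _ _) (hnonneg _ _)] at hk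

lemma dft_eq_sum_periodization (hj : j ≤ J) {k : ℕ} (hk : dftOmega (2 ^ J) ^ (k * 2 ^ j) = 1) :
    dft (2 ^ J) (fun n => (x n : ℂ)) k
      = ∑ m ∈ range (2 ^ j), dftOmega (2 ^ J) ^ (k * m) * (periodization J j x m : ℂ) := by
  rw [dft, show 2 ^ J = 2 ^ j * 2 ^ (J - j) by rw [← pow_add, Nat.add_sub_cancel' hj],
    sum_range_mul_eq_sum_sum, ← Nat.pow_add, Nat.add_sub_cancel' hj]
  refine sum_congr rfl fun m _ => ?_
  rw [periodization, Complex.ofReal_sum, mul_sum]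
  refine sum_congr rfl fun ℓ _ => ?_
  rw [mul_add, pow_add, ← mul_assoc k, pow_mul (dftOmega _) (k * 2 ^ j), hk, one_pow, mul_one]

end Periodization

lemma dftOmega_pow_frequency_mul {J j L : ℕ} (hL : L ≤ J) (hj : j < J) (p m : ℕ) :
    dftOmega (2 ^ J) ^ ((2 ^ (J - L) * p + 2 ^ (J - j - 1)) * m)
      = dftOmega (2 ^ L) ^ (p * m) * dftOmega (2 ^ (j + 1)) ^ m := by
  rw [add_mul, pow_add, mul_assoc, dftOmega_two_pow_pow hL, Nat.sub_sub,
    dftOmega_two_pow_pow (by omega : j + 1 ≤ J)]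

theorem dft_frequency_eq_sum_window {J j L μ : ℕ} (x : ℕ → ℝ) (hx : ∀ k, 0 ≤ x k) (hj : j < J)
    (hL : L ≤ j)
    (hsupp : ∀ k < 2 ^ j, periodization J j x k ≠ 0 → ∃ r < 2 ^ L, k = (μ + r) % 2 ^ j)
    (p : ℕ) :
    dft (2 ^ J) (fun n => (x n : ℂ)) (2 ^ (J - L) * p + 2 ^ (J - j - 1))
      = ∑ r ∈ range (2 ^ L), dftOmega (2 ^ L) ^ (p * (μ + r)) *
          (dftOmega (2 ^ (j + 1)) ^ ((μ + r) % 2 ^ j) *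
            ((periodization J (j + 1) x ((μ + r) % 2 ^ j)
              - periodization J (j + 1) x ((μ + r) % 2 ^ j + 2 ^ j) : ℝ) : ℂ)) := by
  set k := 2 ^ (J - L) * p + 2 ^ (J - j - 1)
  have hω := dftOmega_pow_frequency_mul (by omega : L ≤ J) hj p
  have hdvd {n : ℕ} (hn : L ≤ n) : dftOmega (2 ^ L) ^ (p * 2 ^ n) = 1 :=
    (isPrimitiveRoot_dftOmega (by positivity)).pow_eq_one_iff_dvd _ |>.mpr <|
      dvd_mul_of_dvd_right (pow_dvd_pow 2 hn) p
  have hperiod : dftOmega (2 ^ J) ^ (k * 2 ^ (j + 1)) = 1 := by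
    rw [hω, hdvd (by omega), (isPrimitiveRoot_dftOmega (by positivity)).pow_eq_one, one_mul]
  have hhalf : (dftOmega (2 ^ J) ^ k) ^ 2 ^ j = -1 := by
    rw [← pow_mul, hω, hdvd hL, dftOmega_two_pow_succ_pow, one_mul]
  rw [dft_eq_sum_periodization x hj hperiod]
  simp_rw [pow_mul (dftOmega (2 ^ J)) k]
  rw [show range (2 ^ (j + 1)) = range (2 ^ j + 2 ^ j) by rw [pow_succ, mul_two],
    sum_range_add_self_of_pow_eq_neg_one hhalf,
    sum_range_eq_sum_window μ (Nat.pow_le_pow_right two_pos hL)]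
  · refine sum_congr rfl fun r _ => ?_
    rw [← pow_mul, hω, Complex.ofReal_sub, mul_assoc]
    congr 1
    refine dftOmega_pow_eq_pow_of_modEq (pow_ne_zero L two_ne_zero) (Nat.ModEq.mul_left p ?_)
    exact (Nat.mod_modEq _ _).of_dvd (pow_dvd_pow 2 hL)
  · intro m hm hm0
    refine hsupp m hm fun hzero => hm0 ?_
    obtain ⟨h0, h1⟩ := periodization_succ_eq_zero x hx hj hzero
    simp [h0, h1]

theorem fourierMatrix_mulVec_window {J j L μ : ℕ} (x : ℕ → ℝ) (hx : ∀ k, 0 ≤ x k) (hj : j < J)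
    (hL : L ≤ j)
    (hsupp : ∀ k < 2 ^ j, periodization J j x k ≠ 0 → ∃ r < 2 ^ L, k = (μ + r) % 2 ^ j) :
    (fourierMatrix (2 ^ L) *ᵥ fun r : Fin (2 ^ L) =>
        dftOmega (2 ^ (j + 1)) ^ ((μ + (r : ℕ)) % 2 ^ j) *
          ((periodization J (j + 1) x ((μ + (r : ℕ)) % 2 ^ j)
            - periodization J (j + 1) x ((μ + (r : ℕ)) % 2 ^ j + 2 ^ j) : ℝ) : ℂ))
      = fun p : Fin (2 ^ L) => (dftOmega (2 ^ L) ^ (μ * (p : ℕ)))⁻¹ *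
          dft (2 ^ J) (fun n => (x n : ℂ)) (2 ^ (J - L) * (p : ℕ) + 2 ^ (J - j - 1)) := by
  funext p
  rw [dft_frequency_eq_sum_window x hx hj hL hsupp, mul_sum, mulVec, dotProduct,
    ← Fin.sum_univ_eq_sum_range]
  refine sum_congr rfl fun r _ => ?_
  rw [fourierMatrix, mul_add, pow_add (dftOmega (2 ^ L)), mul_comm μ, mul_assoc,
    inv_mul_cancel_left₀ (pow_ne_zero _ (dftOmega_ne_zero _))]

theorem restricted_recovery_general (J : ℕ) (x : ℕ → ℝ) (hx : ∀ k, 0 ≤ x k)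
    (j : ℕ) (hj : j + 1 ≤ J) (μ : ℕ) (L : ℕ) (hL : L ≤ j)
    (hsupp : ∀ k < 2 ^ j, periodization J j x k ≠ 0 →
      ∃ r < 2 ^ L, k = (μ + r) % 2 ^ j)
    (y : Fin (2 ^ L) → ℂ)
    (hy : ∀ p : Fin (2 ^ L),
      y p = dft (2 ^ J) (fun n => (x n : ℂ)) (2 ^ (J - L) * (p : ℕ) + 2 ^ (J - j - 1))) :
    (∀ r : Fin (2 ^ L),
      (periodization J (j + 1) x ((μ + (r : ℕ)) % 2 ^ j) : ℂ)
        = (1 / 2) * (dftOmega (2 ^ (j + 1)) ^ ((μ + (r : ℕ)) % 2 ^ j))⁻¹ *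
            ((fourierMatrix (2 ^ L))⁻¹.mulVec
              (fun p : Fin (2 ^ L) => (dftOmega (2 ^ L) ^ (μ * (p : ℕ)))⁻¹ * y p) r)
          + (1 / 2) * (periodization J j x ((μ + (r : ℕ)) % 2 ^ j) : ℂ)) ∧
    (∀ r : Fin (2 ^ L),
      periodization J (j + 1) x (2 ^ j + (μ + (r : ℕ)) % 2 ^ j)
        = periodization J j x ((μ + (r : ℕ)) % 2 ^ j)
          - periodization J (j + 1) x ((μ + (r : ℕ)) % 2 ^ j)) := by
  have hsplit := periodization_eq_add_periodization_succ x hj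
  have hFz := fourierMatrix_mulVec_window x hx hj hL hsupp
  simp_rw [← hy] at hFz
  refine ⟨fun r => ?_, fun r => ?_⟩
  · rw [← hFz, fourierMatrix_inv_mulVec_mulVec (pow_ne_zero L two_ne_zero), hsplit,
      mul_assoc (1 / 2 : ℂ), inv_mul_cancel_left₀ (pow_ne_zero _ (dftOmega_ne_zero _))]
    push_cast
    ring
  · rw [hsplit, add_comm (2 ^ j)]
    ring

/-- under the short-support assumption on `x^(j)`, with
`y_p = x̂_{2^{J-L}p + 2^{J-j-1}}`, one has
`x̃_0^(j+1) = (1/2) diag(ω_{2^{j+1}}^{-((μ+r) mod 2^j)}) F_{2^L}^{-1}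
diag(ω_{2^L}^{-μp}) y + (1/2) x̃^(j)`, and
`x̃_1^(j+1) = x̃^(j) − x̃_0^(j+1)`. -/
theorem restricted_recovery (J : ℕ) (x : ℕ → ℝ) (hx : ∀ k, 0 ≤ x k)
    (j : ℕ) (hj : j + 1 ≤ J) (μ : ℕ) (hμ : μ < 2 ^ j) (L : ℕ) (hL : L ≤ j)
    (hsupp : ∀ k < 2 ^ j, periodization J j x k ≠ 0 →
      ∃ r < 2 ^ L, k = (μ + r) % 2 ^ j)
    (y : Fin (2 ^ L) → ℂ)
    (hy : ∀ p : Fin (2 ^ L),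
      y p = dft (2 ^ J) (fun n => (x n : ℂ)) (2 ^ (J - L) * (p : ℕ) + 2 ^ (J - j - 1))) :
    (∀ r : Fin (2 ^ L),
      (periodization J (j + 1) x ((μ + (r : ℕ)) % 2 ^ j) : ℂ)
        = (1 / 2) * (dftOmega (2 ^ (j + 1)) ^ ((μ + (r : ℕ)) % 2 ^ j))⁻¹ *
            ((fourierMatrix (2 ^ L))⁻¹.mulVec
              (fun p : Fin (2 ^ L) => (dftOmega (2 ^ L) ^ (μ * (p : ℕ)))⁻¹ * y p) r)
          + (1 / 2) * (periodization J j x ((μ + (r : ℕ)) % 2 ^ j) : ℂ)) ∧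
    (∀ r : Fin (2 ^ L),
      periodization J (j + 1) x (2 ^ j + (μ + (r : ℕ)) % 2 ^ j)
        = periodization J j x ((μ + (r : ℕ)) % 2 ^ j)
          - periodization J (j + 1) x ((μ + (r : ℕ)) % 2 ^ j)) :=
  restricted_recovery_general J x hx j hj μ L hL hsupp y hy
end

section
/- Let N = 2^J and let x ∈ ℝ^N have nonnegative entries. For every j with 0 ≤ j ≤ J-1, the support lengths of the periodizations are monotone: |supp x^(j)| ≤ |supp x^(j+1)|. In particular, m_0 ≤ m_1 ≤ … ≤ m_J = m, where m_j = |supp x^(j)| and m = |supp x|. -/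
open Complex Finset

/-- The support length of `y ∈ ℝ^M`: the minimal `m` such that `y` vanishes outside some
cyclic interval `{(μ+ℓ) mod M : ℓ < m}`. -/
noncomputable def suppLength (M : ℕ) (y : ℕ → ℝ) : ℕ :=
  sInf {m : ℕ | ∃ μ < M, ∀ k < M, (∀ ℓ < m, k ≠ (μ + ℓ) % M) → y k = 0}

/-!
A cyclic interval `{μ, …, μ + m - 1} mod 2^(j+1)` carrying the support of `x^(j+1)` reduces
mod `2^j` to a cyclic interval of the same length, and `x^(j)_k = x^(j+1)_k + x^(j+1)_{k+2^j}`
vanishes whenever both residues of `k` mod `2^(j+1)` lie outside the original interval.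
-/

theorem sum_range_two_mul_eq_sum_even_add_sum_odd {M : Type*} [AddCommMonoid M]
    (n : ℕ) (f : ℕ → M) :
    ∑ ℓ ∈ range (2 * n), f ℓ = ∑ i ∈ range n, f (2 * i) + ∑ i ∈ range n, f (2 * i + 1) := by
  induction n with
  | zero => simp
  | succ n ih =>
    rw [show 2 * (n + 1) = 2 * n + 1 + 1 by ring, sum_range_succ, sum_range_succ, ih,
      sum_range_succ (fun i => f (2 * i)), sum_range_succ (fun i => f (2 * i + 1))]
    abel

theorem exists_suppLength_interval {M : ℕ} (hM : 0 < M) (y : ℕ → ℝ) :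
    ∃ μ < M, ∀ k < M, (∀ ℓ < suppLength M y, k ≠ (μ + ℓ) % M) → y k = 0 := by
  refine Nat.sInf_mem (s := {m | ∃ μ < M, ∀ k < M, (∀ ℓ < m, k ≠ (μ + ℓ) % M) → y k = 0})
    ⟨M, 0, hM, fun k hk hout => absurd ?_ (hout k hk)⟩
  simp [Nat.mod_eq_of_lt hk]

theorem suppLength_le_of_dvd {n M : ℕ} (hM : 0 < M) (hnM : n ∣ M) {y z : ℕ → ℝ}
    (hyz : ∀ k < n, (∀ k' < M, k' % n = k → z k' = 0) → y k = 0) :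
    suppLength n y ≤ suppLength M z := by
  have hn : 0 < n := Nat.pos_of_dvd_of_pos hnM hM
  obtain ⟨μ, -, hz⟩ := exists_suppLength_interval hM z
  refine Nat.sInf_le ⟨μ % n, Nat.mod_lt _ hn, fun k hk hout => hyz k hk fun k' hk' hk'k => ?_⟩
  refine hz k' hk' fun ℓ hℓ hk'eq => hout ℓ hℓ ?_
  rw [← hk'k, hk'eq, Nat.mod_mod_of_dvd _ hnM, Nat.mod_add_mod]

theorem periodization_self (J : ℕ) (x : ℕ → ℝ) : periodization J J x = x := by
  funext k
  simp [periodization]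

theorem periodization_eq_add {J j : ℕ} (hj : j + 1 ≤ J) (x : ℕ → ℝ) (k : ℕ) :
    periodization J j x k
      = periodization J (j + 1) x k + periodization J (j + 1) x (k + 2 ^ j) := by
  unfold periodization
  rw [show J - j = J - (j + 1) + 1 by omega, pow_succ, mul_comm _ 2,
    sum_range_two_mul_eq_sum_even_add_sum_odd]
  congr 1 <;> refine sum_congr rfl fun i _ => congr_arg x ?_ <;> ring

theorem suppLength_periodization_mono_general (J : ℕ) (x : ℕ → ℝ) :
    (∀ j, j + 1 ≤ J →
      suppLength (2 ^ j) (periodization J j x)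
        ≤ suppLength (2 ^ (j + 1)) (periodization J (j + 1) x)) ∧
    suppLength (2 ^ J) (periodization J J x) = suppLength (2 ^ J) x := by
  refine ⟨fun j hj => ?_, by rw [periodization_self]⟩
  refine suppLength_le_of_dvd (by positivity) (pow_dvd_pow 2 j.le_succ) fun k hk hvanish => ?_
  have hk' : k + 2 ^ j < 2 ^ (j + 1) := by rw [pow_succ]; omega
  rw [periodization_eq_add hj, hvanish k (by omega) (Nat.mod_eq_of_lt hk),
    hvanish (k + 2 ^ j) hk' (by rw [Nat.add_mod_right, Nat.mod_eq_of_lt hk]), add_zero]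

/-- for nonnegative `x`, the support lengths of the periodizations are
monotone: `|supp x^(j)| ≤ |supp x^(j+1)|`; and `m_J = m` since `x^(J) = x`. -/
theorem suppLength_periodization_mono (J : ℕ) (x : ℕ → ℝ) (hx : ∀ k, 0 ≤ x k) :
    (∀ j, j + 1 ≤ J →
      suppLength (2 ^ j) (periodization J j x)
        ≤ suppLength (2 ^ (j + 1)) (periodization J (j + 1) x)) ∧
    suppLength (2 ^ J) (periodization J J x) = suppLength (2 ^ J) x :=
  suppLength_periodization_mono_general J x
end
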